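/- Let (μ_n) be the occupation measures μ_n(B) = (1/t_n)∫₀^{t_n} p_x(s,B) ds for a Markov transition function p_x satisfying the Chapman–Kolmogorov equation, with t_n → ∞. If a subsequence μ_{n_j} converges weakly to a probability measure μ₀, then for every bounded continuous f and every t > 0, ∫ P_t f dμ₀ = ∫ f dμ₀; i.e., μ₀ is an invariant measure. -/

import Mathlib

/-!
Write `F u = P_u f (x)`, which is bounded by `‖f‖_∞`. By Chapman–Kolmogorov, `∫ P_t f dμ_n` is the
average of `F` over `[t, t_n + t]` while `∫ f dμ_n` is its average over `[0, t_n]`; the two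
averages differ by at most `2 ‖f‖_∞ t / t_n → 0`, and passing to the weak limit along `n_j`
gives `∫ P_t f dμ₀ = ∫ f dμ₀`.
-/

open MeasureTheory Filter Set

variable {X : Type*} [MeasurableSpace X]

def IsOccupationMeasure [TopologicalSpace X] (p : X → ℝ → Measure X) (x : X) (T : ℝ)
    (μ : Measure X) : Prop :=
  ∀ f : X → ℝ, Continuous f → (∃ C, ∀ y, |f y| ≤ C) →
    ∫ y, f y ∂μ = (1 / T) * ∫ s in (0 : ℝ)..T, ∫ z, f z ∂p x s

lemma abs_integral_le_of_abs_le {μ : Measure X} [IsProbabilityMeasure μ] {f : X → ℝ} {C : ℝ}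
    (hC : ∀ y, |f y| ≤ C) : |∫ y, f y ∂μ| ≤ C := by
  simpa using norm_integral_le_of_norm_le_const (μ := μ) (f := f) (Eventually.of_forall hC)

lemma abs_intervalIntegral_comp_add_right_sub_le {F : ℝ → ℝ} {C T t : ℝ}
    (hF : ∀ s, |F s| ≤ C) (hint : IntervalIntegrable F volume 0 (T + t)) (hT : 0 ≤ T)
    (ht : 0 ≤ t) :
    |(∫ s in (0 : ℝ)..T, F (s + t)) - ∫ s in (0 : ℝ)..T, F s| ≤ 2 * C * t := by
  have hsub : ∀ a b, a ∈ Icc 0 (T + t) → b ∈ Icc 0 (T + t) → IntervalIntegrable F volume a b :=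
    fun a b ha hb => hint.mono_set <| uIcc_subset_uIcc
      (by rwa [uIcc_of_le (by linarith)]) (by rwa [uIcc_of_le (by linarith)])
  have hend : ∀ a, |∫ s in a..a + t, F s| ≤ C * t := fun a => by
    simpa [abs_of_nonneg ht] using
      intervalIntegral.norm_integral_le_of_norm_le_const (f := F) (a := a) (b := a + t)
        fun s _ => hF s
  rw [intervalIntegral.integral_comp_add_right, zero_add,
    intervalIntegral.integral_interval_sub_interval_comm'
      (hsub _ _ ⟨ht, by linarith⟩ ⟨by linarith, le_rfl⟩)
      (hsub _ _ ⟨le_rfl, by linarith⟩ ⟨hT, by linarith⟩)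
      (hsub _ _ ⟨ht, by linarith⟩ ⟨le_rfl, by linarith⟩)]
  calc _ ≤ |∫ s in T..T + t, F s| + |∫ s in (0 : ℝ)..0 + t, F s| := by
        rw [zero_add, add_comm T t]; exact abs_sub _ _
    _ ≤ C * t + C * t := add_le_add (hend T) (hend 0)
    _ = 2 * C * t := by ring

namespace IsOccupationMeasure

variable [TopologicalSpace X] {p : X → ℝ → Measure X} {x : X} {T : ℝ} {μ : Measure X}

lemma isProbabilityMeasure (hμ : IsOccupationMeasure p x T μ)
    (hprob : ∀ s, IsProbabilityMeasure (p x s)) (hT : T ≠ 0) : IsProbabilityMeasure μ := by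
  have h := hμ (fun _ => 1) continuous_const ⟨1, fun _ => by simp⟩
  simp only [integral_const, probReal_univ, smul_eq_mul, mul_one,
    intervalIntegral.integral_const, sub_zero, one_div, inv_mul_cancel₀ hT] at h
  exact ⟨by simpa [Measure.real, ENNReal.toReal_eq_one_iff] using h⟩

lemma abs_integral_transition_sub_le (hμ : IsOccupationMeasure p x T μ)
    (hprob : ∀ y s, IsProbabilityMeasure (p y s)) (hT : 0 < T) {f : X → ℝ} (hf : Continuous f)
    {C : ℝ} (hC : ∀ y, |f y| ≤ C) {t : ℝ} (ht : 0 ≤ t)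
    (hCK : ∀ s, 0 ≤ s → ∫ z, f z ∂p x (s + t) = ∫ w, (∫ z, f z ∂p w t) ∂p x s)
    (hFeller : Continuous fun y => ∫ z, f z ∂p y t)
    (hint : IntervalIntegrable (fun s => ∫ z, f z ∂p x s) volume 0 (T + t)) :
    |∫ y, (∫ z, f z ∂p y t) ∂μ - ∫ y, f y ∂μ| ≤ 2 * C * t / T := by
  have hPf : ∀ y, |∫ z, f z ∂p y t| ≤ C := fun y => abs_integral_le_of_abs_le hC
  have hshift : ∫ s in (0 : ℝ)..T, ∫ w, (∫ z, f z ∂p w t) ∂p x s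
      = ∫ s in (0 : ℝ)..T, ∫ z, f z ∂p x (s + t) :=
    intervalIntegral.integral_congr fun s hs =>
      (hCK s (by rw [uIcc_of_le hT.le] at hs; exact hs.1)).symm
  rw [hμ _ hFeller ⟨C, hPf⟩, hμ f hf ⟨C, hC⟩, hshift, ← mul_sub, abs_mul,
    abs_of_pos (one_div_pos.mpr hT), one_div_mul_eq_div, div_le_div_iff_of_pos_right hT]
  exact abs_intervalIntegral_comp_add_right_sub_le (fun s => abs_integral_le_of_abs_le hC) hint
    hT.le ht

variable [OpensMeasurableSpace X]

/-- `s ↦ P_s f (x)` is not assumed measurable: were it not integrable on `[0, T]`, the occupation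
identity for `f + C + 1 ≥ 1` would equate a number `≥ 1` with the junk value `0`. -/
lemma intervalIntegrable (hμ : IsOccupationMeasure p x T μ)
    (hprob : ∀ s, IsProbabilityMeasure (p x s)) (hT : 0 < T) {f : X → ℝ} (hf : Continuous f)
    {C : ℝ} (hC : ∀ y, |f y| ≤ C) :
    IntervalIntegrable (fun s => ∫ z, f z ∂p x s) volume 0 T := by
  have := hμ.isProbabilityMeasure hprob hT.ne'
  have hfint : ∀ ν : Measure X, IsProbabilityMeasure ν → Integrable f ν := fun ν _ =>
    Integrable.of_bound hf.aestronglyMeasurable C (Eventually.of_forall hC)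
  have hshift : ∀ ν : Measure X, IsProbabilityMeasure ν →
      ∫ z, f z + (C + 1) ∂ν = ∫ z, f z ∂ν + (C + 1) := fun ν hν => by
    rw [integral_add (hfint ν hν) (integrable_const _), integral_const, probReal_univ, one_smul]
  by_contra hni
  have hzero : ∫ y, f y + (C + 1) ∂μ = 0 := by
    rw [hμ (fun y => f y + (C + 1)) (by fun_prop) ⟨C + (C + 1), fun y => by
        have := abs_le.mp (hC y); exact abs_le.mpr ⟨by linarith, by linarith⟩⟩,
      intervalIntegral.integral_undef, mul_zero]
    simp only [fun s => hshift (p x s) (hprob s)]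
    exact fun h => hni (by simpa using h.sub (intervalIntegrable_const (c := C + 1)))
  have hfμ := abs_le.mp (abs_integral_le_of_abs_le (μ := μ) hC)
  linarith [hshift μ this]

end IsOccupationMeasure

theorem stmt_13_general {d : ℕ}
    (p : EuclideanSpace ℝ (Fin d) → ℝ → Measure (EuclideanSpace ℝ (Fin d)))
    (hprob : ∀ y t, IsProbabilityMeasure (p y t))
    -- Chapman–Kolmogorov equation, in integrated form
    (hCK : ∀ (f : EuclideanSpace ℝ (Fin d) → ℝ), Continuous f → (∃ Cf, ∀ y, |f y| ≤ Cf) →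
      ∀ (y : EuclideanSpace ℝ (Fin d)) (t s : ℝ), 0 ≤ t → 0 ≤ s →
        ∫ z, f z ∂ p y (t + s) = ∫ w, (∫ z, f z ∂ p w s) ∂ p y t)
    -- Feller property
    (hFeller : ∀ (f : EuclideanSpace ℝ (Fin d) → ℝ), Continuous f → (∃ Cf, ∀ y, |f y| ≤ Cf) →
      ∀ t : ℝ, Continuous fun y => ∫ z, f z ∂ p y t)
    (x : EuclideanSpace ℝ (Fin d))
    (tseq : ℕ → ℝ) (htpos : ∀ n, 0 < tseq n) (htlim : Tendsto tseq atTop atTop)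
    (μn : ℕ → Measure (EuclideanSpace ℝ (Fin d)))
    (hμn : ∀ (n : ℕ) (f : EuclideanSpace ℝ (Fin d) → ℝ), Continuous f →
      (∃ Cf, ∀ y, |f y| ≤ Cf) →
      ∫ y, f y ∂ μn n = (1 / tseq n) * ∫ s in (0:ℝ)..tseq n, ∫ z, f z ∂ p x s)
    (φ : ℕ → ℕ) (hφ : StrictMono φ)
    (μ₀ : Measure (EuclideanSpace ℝ (Fin d)))
    (hweak : ∀ (f : EuclideanSpace ℝ (Fin d) → ℝ), Continuous f → (∃ Cf, ∀ y, |f y| ≤ Cf) →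
      Tendsto (fun j => ∫ y, f y ∂ μn (φ j)) atTop (nhds (∫ y, f y ∂ μ₀))) :
    ∀ (f : EuclideanSpace ℝ (Fin d) → ℝ), Continuous f → (∃ Cf, ∀ y, |f y| ≤ Cf) →
      ∀ t : ℝ, 0 < t →
        ∫ y, (∫ z, f z ∂ p y t) ∂ μ₀ = ∫ y, f y ∂ μ₀ := by
  rintro f hf ⟨C, hC⟩ t ht
  have hocc : ∀ n, IsOccupationMeasure p x (tseq n) (μn n) := hμn
  have hint : ∀ a, 0 ≤ a → IntervalIntegrable (fun s => ∫ z, f z ∂p x s) volume 0 a := by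
    intro a ha
    obtain ⟨n, hn⟩ := (htlim.eventually_ge_atTop a).exists
    exact ((hocc n).intervalIntegrable (hprob x) (htpos n) hf hC).mono_set <|
      uIcc_subset_uIcc left_mem_uIcc (by rw [uIcc_of_le (htpos n).le]; exact ⟨ha, hn⟩)
  have hPf := hFeller f hf ⟨C, hC⟩ t
  have hbound : ∀ j, ‖∫ y, (∫ z, f z ∂p y t) ∂μn (φ j) - ∫ y, f y ∂μn (φ j)‖
      ≤ 2 * C * t / tseq (φ j) := fun j =>
    (hocc (φ j)).abs_integral_transition_sub_le hprob (htpos _) hf hC ht.le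
      (fun s hs => hCK f hf ⟨C, hC⟩ x s t hs ht.le) hPf (hint _ (by linarith [htpos (φ j)]))
  have hdiff_zero := squeeze_zero_norm hbound <|
    tendsto_const_nhds.div_atTop (htlim.comp hφ.tendsto_atTop)
  have hdiff_lim := (hweak _ hPf ⟨C, fun y => abs_integral_le_of_abs_le hC⟩).sub
    (hweak f hf ⟨C, hC⟩)
  exact sub_eq_zero.mp (tendsto_nhds_unique hdiff_lim hdiff_zero)

/-- A weak limit of occupation measures of a Feller Markov transition function is an
invariant measure: if `μ_n(B) = (1/t_n)∫₀^{t_n} p_x(s, B) ds` with `t_n → ∞` and a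
subsequence `μ_{n_j}` converges weakly to a probability measure `μ₀`, then
`∫ P_t f dμ₀ = ∫ f dμ₀` for every bounded continuous `f` and `t > 0`. -/
theorem stmt_13 {d : ℕ}
    (p : EuclideanSpace ℝ (Fin d) → ℝ → Measure (EuclideanSpace ℝ (Fin d)))
    (hprob : ∀ y t, IsProbabilityMeasure (p y t))
    -- Chapman–Kolmogorov equation, in integrated form
    (hCK : ∀ (f : EuclideanSpace ℝ (Fin d) → ℝ), Continuous f → (∃ Cf, ∀ y, |f y| ≤ Cf) →
      ∀ (y : EuclideanSpace ℝ (Fin d)) (t s : ℝ), 0 ≤ t → 0 ≤ s →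
        ∫ z, f z ∂ p y (t + s) = ∫ w, (∫ z, f z ∂ p w s) ∂ p y t)
    -- Feller property
    (hFeller : ∀ (f : EuclideanSpace ℝ (Fin d) → ℝ), Continuous f → (∃ Cf, ∀ y, |f y| ≤ Cf) →
      ∀ t : ℝ, Continuous fun y => ∫ z, f z ∂ p y t)
    (x : EuclideanSpace ℝ (Fin d))
    (tseq : ℕ → ℝ) (htpos : ∀ n, 0 < tseq n) (htlim : Tendsto tseq atTop atTop)
    (μn : ℕ → Measure (EuclideanSpace ℝ (Fin d)))
    (hμn : ∀ (n : ℕ) (f : EuclideanSpace ℝ (Fin d) → ℝ), Continuous f →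
      (∃ Cf, ∀ y, |f y| ≤ Cf) →
      ∫ y, f y ∂ μn n = (1 / tseq n) * ∫ s in (0:ℝ)..tseq n, ∫ z, f z ∂ p x s)
    (φ : ℕ → ℕ) (hφ : StrictMono φ)
    (μ₀ : Measure (EuclideanSpace ℝ (Fin d))) [IsProbabilityMeasure μ₀]
    (hweak : ∀ (f : EuclideanSpace ℝ (Fin d) → ℝ), Continuous f → (∃ Cf, ∀ y, |f y| ≤ Cf) →
      Tendsto (fun j => ∫ y, f y ∂ μn (φ j)) atTop (nhds (∫ y, f y ∂ μ₀))) :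
    ∀ (f : EuclideanSpace ℝ (Fin d) → ℝ), Continuous f → (∃ Cf, ∀ y, |f y| ≤ Cf) →
      ∀ t : ℝ, 0 < t →
        ∫ y, (∫ z, f z ∂ p y t) ∂ μ₀ = ∫ y, f y ∂ μ₀ :=
  stmt_13_general p hprob hCK hFeller x tseq htpos htlim μn hμn φ hφ μ₀ hweak
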